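/- Let G be a finite simple graph with m ≥ 2 edges and minimum degree at least 1, let A and B be disjoint sets of vertices of G with |A| ≤ |B|, and let ℓ ≥ 32·log₂ m be an integer. Then at least one of the following holds: (i) there exist a matching M between A and B with |M| = |A| (so every vertex of A is matched to a distinct vertex of B), together with a family (P_{ab})_{(a,b)∈M} of paths in G, where each P_{ab} joins a to b and has length at most ℓ, and every edge of G lies on at most ℓ² of these paths; or (ii) there is a partition of V(G) into nonempty sets X and Y with δ_G(X) ≤ (24·log₂ m/ℓ)·min(vol_G(X), vol_G(Y)). -/

import Mathlib

/-! If no cut is sparse, `G` is a `φ`-expander for `φ = 24 log₂ m / ℓ`: every vertex set `S` of at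
most half the volume has `δ(S) ≥ φ vol(S)`. Route greedily: take a maximal family of edge-disjoint
paths of length `≤ ℓ` between the still unrouted vertices of `A` and `B`, say `r` of them, and
delete their `≤ rℓ` edges. The balls of radius `ℓ / 2` around the unrouted vertices on the two
sides are then disjoint, so one of them has at most half the volume; along the way the quantity
`vol − rℓ / φ` grows by a factor `1 + φ` per step, and `(1 + φ) ^ (ℓ / 2) ≥ 2m` forces at most
`1/2 + rℓ / φ` unrouted vertices on that side. So each round routes a `φ / (2(ℓ + 1))` fraction
of what is left, and `ℓ²` such rounds, each using every edge at most once, route all of `A`. -/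

open Finset
open scoped Classical

noncomputable section

variable {V : Type*} [Fintype V]

/-- The degree of the vertex `v` in the graph `G`. -/
def gdeg (G : SimpleGraph V) (v : V) : ℕ :=
  (Finset.univ.filter fun u => G.Adj v u).card

/-- The volume of a vertex set `S` in `G`: the sum of degrees of its vertices. -/
def gvol (G : SimpleGraph V) (S : Finset V) : ℕ := ∑ v ∈ S, gdeg G v

/-- The number of edges of `G` with exactly one endpoint in `S`. -/
def gcut (G : SimpleGraph V) (S : Finset V) : ℕ :=
  (Finset.univ.filter fun p : V × V => p.1 ∈ S ∧ p.2 ∉ S ∧ G.Adj p.1 p.2).card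

/-- The number of edges of `G`. -/
def edgeCount (G : SimpleGraph V) : ℕ :=
  (Finset.univ.filter fun p : V × V => G.Adj p.1 p.2).card / 2

set_option linter.unusedSectionVars false

variable (G : SimpleGraph V)

lemma gdeg_eq_degree (v : V) : gdeg G v = G.degree v := by
  rw [gdeg, ← SimpleGraph.card_neighborFinset_eq_degree]
  congr 1
  ext u
  simp

lemma gvol_univ : gvol G univ = 2 * edgeCount G := by
  have hdeg : gvol G univ = 2 * #G.edgeFinset := by
    simp only [gvol, gdeg_eq_degree, SimpleGraph.sum_degrees_eq_twice_card_edges]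
  have hdarts : 2 * #G.edgeFinset = #(univ.filter fun p : V × V => G.Adj p.1 p.2) := by
    convert SimpleGraph.two_mul_card_edgeFinset G using 2
  rw [edgeCount, hdeg, hdarts]
  omega

lemma gvol_union {S T : Finset V} (h : Disjoint S T) : gvol G (S ∪ T) = gvol G S + gvol G T :=
  sum_union h

lemma gvol_add_gvol_compl (S : Finset V) : gvol G S + gvol G (univ \ S) = gvol G univ := by
  rw [← gvol_union G disjoint_sdiff, union_sdiff_of_subset (subset_univ S)]

lemma gvol_mono {S T : Finset V} (h : S ⊆ T) : gvol G S ≤ gvol G T :=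
  sum_le_sum_of_subset h

lemma card_le_gvol (hmin : ∀ v : V, 1 ≤ gdeg G v) (S : Finset V) : #S ≤ gvol G S := by
  simpa [gvol] using sum_le_sum fun v (_ : v ∈ S) => hmin v

lemma inter_nonempty_of_gvol_univ_lt {S T : Finset V} (h : gvol G univ < gvol G S + gvol G T) :
    (S ∩ T).Nonempty := by
  by_contra hST
  rw [not_nonempty_iff_eq_empty, ← disjoint_iff_inter_eq_empty] at hST
  have := gvol_mono G (subset_univ (S ∪ T))
  rw [gvol_union G hST] at this
  omega

def IsExpander (φ : ℝ) : Prop :=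
  ∀ S : Finset V, 2 * gvol G S ≤ gvol G univ → φ * gvol G S ≤ gcut G S

lemma isExpander_of_forall_lt_gcut {φ : ℝ}
    (h : ∀ X : Finset V, X.Nonempty → (univ \ X).Nonempty →
      φ * min (gvol G X : ℝ) (gvol G (univ \ X)) < gcut G X) :
    IsExpander G φ := by
  intro S hS
  have hcompl := gvol_add_gvol_compl G S
  by_cases hne : S.Nonempty ∧ (univ \ S).Nonempty
  · have hmin : min (gvol G S : ℝ) (gvol G (univ \ S)) = gvol G S :=
      min_eq_left (by exact_mod_cast (by omega : gvol G S ≤ gvol G (univ \ S)))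
    exact (hmin ▸ h S hne.1 hne.2).le
  · have hzero : gvol G S = 0 := by
      rcases not_and_or.mp hne with hS' | hS'
      · simp [not_nonempty_iff_eq_empty.mp hS', gvol]
      · rw [not_nonempty_iff_eq_empty.mp hS'] at hcompl
        simp only [gvol, sum_empty] at hcompl hS ⊢
        omega
    simp [hzero]

variable (D : Finset (Sym2 V))

def outerBoundary (S : Finset V) : Finset V :=
  univ.filter fun v => v ∉ S ∧ ∃ u ∈ S, G.Adj u v ∧ s(u, v) ∉ D

def ballAvoiding (S : Finset V) : ℕ → Finset V
  | 0 => S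
  | n + 1 => ballAvoiding S n ∪ outerBoundary G D (ballAvoiding S n)

lemma ballAvoiding_mono (S : Finset V) : Monotone (ballAvoiding G D S) :=
  monotone_nat_of_le_succ fun _ => subset_union_left

lemma exists_walk_of_mem_ballAvoiding (S : Finset V) (n : ℕ) {v : V}
    (hv : v ∈ ballAvoiding G D S n) :
    ∃ u ∈ S, ∃ w : G.Walk u v, w.length ≤ n ∧ ∀ e ∈ w.edges, e ∉ D := by
  induction n generalizing v with
  | zero => exact ⟨v, hv, .nil, le_rfl, by simp⟩
  | succ n ih =>
    rcases mem_union.mp hv with hv | hv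
    · obtain ⟨u, hu, w, hlen, hD⟩ := ih hv
      exact ⟨u, hu, w, hlen.trans n.le_succ, hD⟩
    · obtain ⟨-, x, hx, hadj, hxv⟩ := (mem_filter.mp hv).2
      obtain ⟨u, hu, w, hlen, hD⟩ := ih hx
      refine ⟨u, hu, w.concat hadj, by simpa using hlen, ?_⟩
      simp only [SimpleGraph.Walk.edges_concat, List.concat_eq_append, List.mem_append,
        List.mem_singleton]
      rintro e (he | rfl)
      exacts [hD e he, hxv]

def crossingAvoiding (S : Finset V) : Finset (V × V) :=
  univ.filter fun p => p.1 ∈ S ∧ p.2 ∉ S ∧ G.Adj p.1 p.2 ∧ s(p.1, p.2) ∉ D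

lemma gcut_le_card_crossingAvoiding_add (S : Finset V) :
    gcut G S ≤ #(crossingAvoiding G D S) + #D := by
  set C := univ.filter fun p : V × V => p.1 ∈ S ∧ p.2 ∉ S ∧ G.Adj p.1 p.2
  have hsplit := card_filter_add_card_filter_not (s := C) fun p => s(p.1, p.2) ∉ D
  have havoid : C.filter (fun p => s(p.1, p.2) ∉ D) = crossingAvoiding G D S := by
    ext p; simp [C, crossingAvoiding, and_assoc]
  have hin : #(C.filter fun p => ¬ s(p.1, p.2) ∉ D) ≤ #D := by
    refine card_le_card_of_injOn (fun p => s(p.1, p.2))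
      (fun p hp => not_not.mp (mem_filter.mp hp).2) ?_
    rintro p hp q hq hpq
    simp only [coe_filter, Set.mem_ofPred_eq, C, mem_filter, mem_univ, true_and] at hp hq
    rcases Sym2.eq_iff.mp hpq with ⟨h1, h2⟩ | ⟨h1, -⟩
    · exact Prod.ext h1 h2
    · exact absurd (h1 ▸ hp.1.1) hq.1.2.1
  rw [gcut, ← hsplit, havoid]
  omega

lemma card_crossingAvoiding_le_gvol (S : Finset V) :
    #(crossingAvoiding G D S) ≤ gvol G (outerBoundary G D S) := by
  have hmaps :
      Set.MapsTo Prod.snd (crossingAvoiding G D S : Set (V × V)) (outerBoundary G D S : Set V) := by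
    intro p hp
    simp only [crossingAvoiding, outerBoundary, coe_filter, mem_univ, true_and,
      Set.mem_ofPred_eq] at hp ⊢
    exact ⟨hp.2.1, p.1, hp.1, hp.2.2⟩
  rw [card_eq_sum_card_fiberwise hmaps, gvol]
  refine sum_le_sum fun v _ => card_le_card_of_injOn Prod.fst ?_ ?_
  · intro p hp
    simp only [crossingAvoiding, coe_filter, mem_filter, mem_univ, true_and,
      Set.mem_ofPred_eq] at hp ⊢
    exact hp.2 ▸ hp.1.2.2.1.symm
  · intro p hp q hq h
    simp only [coe_filter, Set.mem_ofPred_eq] at hp hq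
    exact Prod.ext h (hp.2.trans hq.2.symm)

lemma gvol_add_gcut_le (S : Finset V) :
    gvol G S + gcut G S ≤ gvol G (S ∪ outerBoundary G D S) + #D := by
  have hdisj : Disjoint S (outerBoundary G D S) :=
    disjoint_left.mpr fun v hv hv' => (mem_filter.mp hv').2.1 hv
  rw [gvol_union G hdisj]
  linarith [gcut_le_card_crossingAvoiding_add G D S, card_crossingAvoiding_le_gvol G D S]

section

variable {G} {φ : ℝ} (hG : IsExpander G φ) (hφ : 0 < φ)
include hG hφ

/-- Since `vol S + cut S ≤ vol S' + |D|` for the next ball `S'` and `cut S ≥ φ vol S`, the quantity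
`vol − |D| / φ` grows by a factor `1 + φ` per step. -/
lemma pow_mul_gvol_sub_le (T : Finset V) (n : ℕ)
    (hsmall : 2 * gvol G (ballAvoiding G D T n) ≤ gvol G univ) :
    (1 + φ) ^ n * (gvol G T - #D / φ) ≤ gvol G (ballAvoiding G D T n) - #D / φ := by
  induction n with
  | zero => simp [ballAvoiding]
  | succ n ih =>
    set S := ballAvoiding G D T n
    have hS : 2 * gvol G S ≤ gvol G univ :=
      le_trans (by gcongr; exact gvol_mono G (ballAvoiding_mono G D T n.le_succ)) hsmall
    have hgrow : (gvol G S + gcut G S : ℝ) ≤ gvol G (ballAvoiding G D T (n + 1)) + #D := by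
      exact_mod_cast gvol_add_gcut_le G D S
    have hexp := hG S hS
    have hDφ : (1 + φ) * (#D / φ) = #D / φ + #D := by field_simp
    calc (1 + φ) ^ (n + 1) * (gvol G T - #D / φ)
        = (1 + φ) * ((1 + φ) ^ n * (gvol G T - #D / φ)) := by ring
      _ ≤ (1 + φ) * (gvol G S - #D / φ) := by gcongr; exact ih hS
      _ ≤ _ := by linarith

lemma card_le_of_two_mul_gvol_ballAvoiding_le (hmin : ∀ v : V, 1 ≤ gdeg G v)
    (T : Finset V) (n : ℕ) (hsmall : 2 * gvol G (ballAvoiding G D T n) ≤ gvol G univ)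
    (hpow : gvol G univ ≤ (1 + φ) ^ n) :
    (#T : ℝ) ≤ 1 / 2 + #D / φ := by
  have hgrowth := pow_mul_gvol_sub_le D hG hφ T n hsmall
  have hsmall' : (2 * gvol G (ballAvoiding G D T n) : ℝ) ≤ gvol G univ := by exact_mod_cast hsmall
  have hT : (#T : ℝ) ≤ gvol G T := by exact_mod_cast card_le_gvol G hmin T
  have hD : (0 : ℝ) ≤ #D / φ := by positivity
  by_contra! hcon
  have hpos : (1 / 2 : ℝ) < gvol G T - #D / φ := by linarith
  have := mul_lt_mul_of_pos_left hpos (pow_pos (by linarith : (0 : ℝ) < 1 + φ) n)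
  linarith

end

structure Route where
  src : V
  dst : V
  walk : G.Walk src dst

variable {G}

def sources (R : List (Route G)) : Finset V := (R.map Route.src).toFinset

def targets (R : List (Route G)) : Finset V := (R.map Route.dst).toFinset

def usedEdges (R : List (Route G)) : Finset (Sym2 V) := (R.flatMap fun x => x.walk.edges).toFinset

lemma mem_usedEdges {R : List (Route G)} {e : Sym2 V} :
    e ∈ usedEdges R ↔ ∃ x ∈ R, e ∈ x.walk.edges := by
  simp [usedEdges]

lemma card_usedEdges_le {R : List (Route G)} {ℓ : ℕ} (h : ∀ x ∈ R, x.walk.length ≤ ℓ) :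
    #(usedEdges R) ≤ R.length * ℓ := by
  refine (List.toFinset_card_le _).trans ?_
  rw [List.length_flatMap]
  simpa using List.sum_le_card_nsmul (R.map fun x => x.walk.edges.length) ℓ (by simpa using h)

structure IsRouting (A B : Finset V) (ℓ c : ℕ) (R : List (Route G)) : Prop where
  src_mem : ∀ x ∈ R, x.src ∈ A
  dst_mem : ∀ x ∈ R, x.dst ∈ B
  nodup_src : (R.map Route.src).Nodup
  nodup_dst : (R.map Route.dst).Nodup
  isPath : ∀ x ∈ R, x.walk.IsPath
  length_le : ∀ x ∈ R, x.walk.length ≤ ℓ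
  countP_le : ∀ e, R.countP (fun x => e ∈ x.walk.edges) ≤ c

namespace IsRouting

variable {A B : Finset V} {ℓ c : ℕ} {R : List (Route G)}

lemma nil : IsRouting A B ℓ c ([] : List (Route G)) :=
  ⟨by simp, by simp, by simp, by simp, by simp, by simp, by simp⟩

lemma card_sources (h : IsRouting A B ℓ c R) : #(sources R) = R.length := by
  rw [sources, List.toFinset_card_of_nodup h.nodup_src, List.length_map]

lemma card_targets (h : IsRouting A B ℓ c R) : #(targets R) = R.length := by
  rw [targets, List.toFinset_card_of_nodup h.nodup_dst, List.length_map]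

lemma sources_subset (h : IsRouting A B ℓ c R) : sources R ⊆ A := by
  intro a ha
  obtain ⟨x, hx, rfl⟩ := List.mem_map.mp (List.mem_toFinset.mp ha)
  exact h.src_mem x hx

lemma targets_subset (h : IsRouting A B ℓ c R) : targets R ⊆ B := by
  intro b hb
  obtain ⟨x, hx, rfl⟩ := List.mem_map.mp (List.mem_toFinset.mp hb)
  exact h.dst_mem x hx

lemma length_le_card (h : IsRouting A B ℓ c R) : R.length ≤ #A :=
  h.card_sources ▸ card_le_card h.sources_subset

lemma card_sdiff_sources (h : IsRouting A B ℓ c R) : #(A \ sources R) = #A - R.length := by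
  rw [card_sdiff_of_subset h.sources_subset, h.card_sources]

lemma card_sdiff_targets (h : IsRouting A B ℓ c R) : #(B \ targets R) = #B - R.length := by
  rw [card_sdiff_of_subset h.targets_subset, h.card_targets]

lemma cons {a b : V} {w : G.Walk a b} (h : IsRouting A B ℓ 1 R)
    (ha : a ∈ A \ sources R) (hb : b ∈ B \ targets R) (hw : w.IsPath) (hwℓ : w.length ≤ ℓ)
    (hwR : ∀ e ∈ w.edges, e ∉ usedEdges R) :
    IsRouting A B ℓ 1 (⟨a, b, w⟩ :: R) := by
  rw [mem_sdiff, sources, List.mem_toFinset] at ha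
  rw [mem_sdiff, targets, List.mem_toFinset] at hb
  refine ⟨?_, ?_, List.nodup_cons.mpr ⟨ha.2, h.nodup_src⟩,
    List.nodup_cons.mpr ⟨hb.2, h.nodup_dst⟩, ?_, ?_, fun e => ?_⟩
  · simpa [ha.1] using h.src_mem
  · simpa [hb.1] using h.dst_mem
  · simpa [hw] using h.isPath
  · simpa [hwℓ] using h.length_le
  · rw [List.countP_cons]
    by_cases he : e ∈ w.edges
    · have hzero : R.countP (fun x => e ∈ x.walk.edges) = 0 :=
        List.countP_eq_zero.mpr fun x hx hex =>
          hwR e he (mem_usedEdges.mpr ⟨x, hx, of_decide_eq_true hex⟩)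
      simp [hzero, he]
    · simpa [he] using h.countP_le e

lemma append {c' : ℕ} {R' : List (Route G)} (h : IsRouting A B ℓ c R)
    (h' : IsRouting (A \ sources R) (B \ targets R) ℓ c' R') :
    IsRouting A B ℓ (c + c') (R ++ R') := by
  refine ⟨?_, ?_, ?_, ?_, ?_, ?_, fun e => ?_⟩
  · simp only [List.mem_append]
    rintro x (hx | hx)
    exacts [h.src_mem x hx, (mem_sdiff.mp (h'.src_mem x hx)).1]
  · simp only [List.mem_append]
    rintro x (hx | hx)
    exacts [h.dst_mem x hx, (mem_sdiff.mp (h'.dst_mem x hx)).1]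
  · rw [List.map_append]
    refine h.nodup_src.append h'.nodup_src fun a ha ha' => ?_
    obtain ⟨x, hx, rfl⟩ := List.mem_map.mp ha'
    exact (mem_sdiff.mp (h'.src_mem x hx)).2 (List.mem_toFinset.mpr ha)
  · rw [List.map_append]
    refine h.nodup_dst.append h'.nodup_dst fun b hb hb' => ?_
    obtain ⟨x, hx, rfl⟩ := List.mem_map.mp hb'
    exact (mem_sdiff.mp (h'.dst_mem x hx)).2 (List.mem_toFinset.mpr hb)
  · simp only [List.mem_append]
    rintro x (hx | hx)
    exacts [h.isPath x hx, h'.isPath x hx]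
  · simp only [List.mem_append]
    rintro x (hx | hx)
    exacts [h.length_le x hx, h'.length_le x hx]
  · rw [List.countP_append]
    exact add_le_add (h.countP_le e) (h'.countP_le e)

end IsRouting

variable (G) in
def HasShortPathMatching (A B : Finset V) (ℓ c : ℕ) : Prop :=
  ∃ M : Finset (V × V),
    (∀ p ∈ M, p.1 ∈ A ∧ p.2 ∈ B) ∧
    (∀ p ∈ M, ∀ q ∈ M, p ≠ q → p.1 ≠ q.1 ∧ p.2 ≠ q.2) ∧
    M.card = A.card ∧
    ∃ P : ∀ p : {x : V × V // x ∈ M}, G.Walk p.1.1 p.1.2,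
      (∀ p, (P p).IsPath ∧ (P p).length ≤ ℓ) ∧
      (∀ e : Sym2 V, {p : {x : V × V // x ∈ M} | e ∈ (P p).edges}.ncard ≤ c)

lemma IsRouting.hasShortPathMatching {A B : Finset V} {ℓ c : ℕ} {R : List (Route G)}
    (h : IsRouting A B ℓ c R) (hlen : R.length = #A) : HasShortPathMatching G A B ℓ c := by
  let f : Route G → V × V := fun x => (x.src, x.dst)
  have hnodup : R.Nodup := h.nodup_src.of_map _
  have hinj_src := List.inj_on_of_nodup_map h.nodup_src
  have hinj_dst := List.inj_on_of_nodup_map h.nodup_dst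
  have hinj : Set.InjOn f R.toFinset := fun x hx y hy hxy =>
    hinj_src (List.mem_toFinset.mp hx) (List.mem_toFinset.mp hy) (congrArg Prod.fst hxy)
  have hmemM : ∀ p ∈ R.toFinset.image f, ∃ x ∈ R, f x = p := by simp
  refine ⟨R.toFinset.image f, ?_, ?_, ?_, ?_⟩
  · intro p hp
    obtain ⟨x, hx, rfl⟩ := hmemM p hp
    exact ⟨h.src_mem x hx, h.dst_mem x hx⟩
  · intro p hp q hq hpq
    obtain ⟨x, hx, rfl⟩ := hmemM p hp
    obtain ⟨y, hy, rfl⟩ := hmemM q hq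
    exact ⟨fun hs => hpq (congrArg f (hinj_src hx hy hs)),
      fun hd => hpq (congrArg f (hinj_dst hx hy hd))⟩
  · rw [card_image_of_injOn hinj, List.toFinset_card_of_nodup hnodup, hlen]
  · choose g hgR hgf using fun p : {x // x ∈ R.toFinset.image f} => hmemM p.1 p.2
    refine ⟨fun p => (g p).walk.copy (congrArg Prod.fst (hgf p)) (congrArg Prod.snd (hgf p)),
      fun p => ?_, fun e => ?_⟩
    · simpa using ⟨h.isPath _ (hgR p), h.length_le _ (hgR p)⟩
    · have hg : Function.Injective g := fun p q hpq =>
        Subtype.ext ((hgf p).symm.trans (hpq ▸ hgf q))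
      calc _ ≤ ((R.filter fun x => e ∈ x.walk.edges).toFinset : Set (Route G)).ncard := by
            refine Set.ncard_le_ncard_of_injOn g (fun p hp => ?_) hg.injOn
            simpa [hgR p] using hp
        _ = R.countP (fun x => e ∈ x.walk.edges) := by
            rw [Set.ncard_coe_finset, List.toFinset_card_of_nodup (hnodup.filter _),
              List.countP_eq_length_filter]
        _ ≤ c := h.countP_le e

lemma exists_isRouting_maximal (A B : Finset V) (ℓ : ℕ) :
    ∃ R : List (Route G), IsRouting A B ℓ 1 R ∧
      ∀ a ∈ A \ sources R, ∀ b ∈ B \ targets R, ∀ w : G.Walk a b, w.length ≤ ℓ →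
        ∃ e ∈ w.edges, e ∈ usedEdges R := by
  let P n := ∃ R : List (Route G), IsRouting A B ℓ 1 R ∧ R.length = n
  obtain ⟨R, hR, hlen⟩ : P (Nat.findGreatest P #A) :=
    Nat.findGreatest_spec (Nat.zero_le _) ⟨[], .nil, rfl⟩
  refine ⟨R, hR, fun a ha b hb w hw => ?_⟩
  by_contra! hfree
  have hR' := hR.cons ha hb w.bypass_isPath (w.length_bypass_le_length.trans hw)
    fun e he => hfree e (w.edges_bypass_subset_edges he)
  exact Nat.findGreatest_is_greatest (P := P) (by simp [hlen]) hR'.length_le_card ⟨_, hR', rfl⟩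

lemma two_mul_gvol_ballAvoiding_le_or (S T : Finset V) (k : ℕ)
    (h : ∀ a ∈ S, ∀ b ∈ T, ∀ w : G.Walk a b, w.length ≤ 2 * k → ∃ e ∈ w.edges, e ∈ D) :
    2 * gvol G (ballAvoiding G D S k) ≤ gvol G univ ∨
      2 * gvol G (ballAvoiding G D T k) ≤ gvol G univ := by
  by_contra! hbig
  obtain ⟨z, hz⟩ := inter_nonempty_of_gvol_univ_lt G (by omega :
    gvol G univ < gvol G (ballAvoiding G D S k) + gvol G (ballAvoiding G D T k))
  rw [mem_inter] at hz
  obtain ⟨a, ha, w₁, hw₁, hD₁⟩ := exists_walk_of_mem_ballAvoiding G D S k hz.1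
  obtain ⟨b, hb, w₂, hw₂, hD₂⟩ := exists_walk_of_mem_ballAvoiding G D T k hz.2
  obtain ⟨e, he, heD⟩ := h a ha b hb (w₁.append w₂.reverse) (by simp; omega)
  rcases List.mem_append.mp (SimpleGraph.Walk.edges_append _ _ ▸ he) with he | he
  · exact hD₁ e he heD
  · exact hD₂ e (by simpa using he) heD

section

variable {φ : ℝ} (hG : IsExpander G φ) (hφ : 0 < φ) (hφ2 : φ ≤ 2)
  (hmin : ∀ v : V, 1 ≤ gdeg G v) {ℓ : ℕ} (hpow : gvol G univ ≤ (1 + φ) ^ (ℓ / 2))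
include hG hφ hφ2 hmin hpow

lemma exists_isRouting_one_of_isExpander (A B : Finset V) (hAB : #A ≤ #B) :
    ∃ R : List (Route G), IsRouting A B ℓ 1 R ∧ φ * #A ≤ 2 * (ℓ + 1) * R.length := by
  obtain ⟨R, hR, hmax⟩ := exists_isRouting_maximal A B ℓ
  refine ⟨R, hR, ?_⟩
  set D := usedEdges R
  have hr := hR.length_le_card
  have hunrouted : ((#A - R.length : ℕ) : ℝ) ≤ 1 / 2 + #D / φ := by
    rcases two_mul_gvol_ballAvoiding_le_or D (A \ sources R) (B \ targets R) (ℓ / 2)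
      fun a ha b hb w hw => hmax a ha b hb w (by omega) with hA | hB
    · simpa [hR.card_sdiff_sources] using
        card_le_of_two_mul_gvol_ballAvoiding_le D hG hφ hmin _ _ hA hpow
    · refine le_trans ?_ (card_le_of_two_mul_gvol_ballAvoiding_le D hG hφ hmin _ _ hB hpow)
      rw [hR.card_sdiff_targets]
      exact_mod_cast (by omega : #A - R.length ≤ #B - R.length)
  have hD : (#D : ℝ) ≤ R.length * ℓ := by exact_mod_cast card_usedEdges_le hR.length_le
  have hr0 : (0 : ℝ) ≤ R.length := R.length.cast_nonneg
  rcases hr.eq_or_lt with heq | hlt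
  · rw [← heq]
    nlinarith
  · have hgap : (1 : ℝ) ≤ #A - R.length := by
      rw [← Nat.cast_sub hr]; exact_mod_cast (by omega : 1 ≤ #A - R.length)
    rw [Nat.cast_sub hr] at hunrouted
    have hcleared : φ * (#A - R.length) ≤ φ / 2 + #D := by
      calc φ * (#A - R.length) ≤ φ * (1 / 2 + #D / φ) := by gcongr
        _ = φ / 2 + #D := by field_simp
    nlinarith

lemma exists_isRouting_of_isExpander (t : ℕ) (A B : Finset V) (hAB : #A ≤ #B) :
    ∃ R : List (Route G), IsRouting A B ℓ t R ∧
      (#A : ℝ) - R.length ≤ (1 - φ / (2 * (ℓ + 1))) ^ t * #A := by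
  induction t generalizing A B with
  | zero => exact ⟨[], .nil, by simp⟩
  | succ t ih =>
    obtain ⟨R₁, h₁, hR₁⟩ := exists_isRouting_one_of_isExpander hG hφ hφ2 hmin hpow A B hAB
    have hAB' : #(A \ sources R₁) ≤ #(B \ targets R₁) := by
      rw [h₁.card_sdiff_sources, h₁.card_sdiff_targets]; omega
    obtain ⟨R₂, h₂, hR₂⟩ := ih _ _ hAB'
    refine ⟨R₁ ++ R₂, add_comm 1 t ▸ h₁.append h₂, ?_⟩
    set ρ := φ / (2 * (ℓ + 1))
    have hℓ : (0 : ℝ) < 2 * (ℓ + 1) := by positivity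
    have hρ : ρ ≤ 1 := (div_le_one hℓ).mpr (by linarith [(ℓ.cast_nonneg : (0 : ℝ) ≤ ℓ)])
    have hround : (#A : ℝ) - R₁.length ≤ (1 - ρ) * #A := by
      have : ρ * #A ≤ R₁.length := by
        rw [div_mul_eq_mul_div, div_le_iff₀ hℓ]; linarith
      linarith
    have hcast : (#(A \ sources R₁) : ℝ) = #A - R₁.length := by
      rw [h₁.card_sdiff_sources, Nat.cast_sub h₁.length_le_card]
    rw [hcast] at hR₂
    calc (#A : ℝ) - (R₁ ++ R₂).length = (#A - R₁.length) - R₂.length := by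
          push_cast [List.length_append]; ring
      _ ≤ (1 - ρ) ^ t * (#A - R₁.length) := hR₂
      _ ≤ (1 - ρ) ^ t * ((1 - ρ) * #A) := by gcongr
      _ = (1 - ρ) ^ (t + 1) * #A := by ring

end

lemma one_le_logb_two {m : ℕ} (hm : 2 ≤ m) : 1 ≤ Real.logb 2 m :=
  (Real.le_logb_iff_rpow_le one_lt_two (by positivity)).mpr (by simpa)

lemma two_mul_le_one_add_pow {m ℓ : ℕ} (hm : 2 ≤ m) (hℓ : 32 * Real.logb 2 m ≤ ℓ) :
    (2 * m : ℝ) ≤ (1 + 24 * Real.logb 2 m / ℓ) ^ (ℓ / 2) := by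
  set L := Real.logb 2 m
  have hL : 1 ≤ L := one_le_logb_two hm
  have hℓ0 : (0 : ℝ) < ℓ := by linarith
  set φ := 24 * L / ℓ
  have hφ1 : φ ≤ 1 := (div_le_one hℓ0).mpr (by linarith)
  have hk : (ℓ : ℝ) ≤ 2 * (ℓ / 2 : ℕ) + 1 := by exact_mod_cast (by omega : ℓ ≤ 2 * (ℓ / 2) + 1)
  have hexp : L + 1 ≤ φ * (ℓ / 2 : ℕ) := by
    rw [div_mul_eq_mul_div, le_div_iff₀ hℓ0]
    nlinarith
  calc (2 * m : ℝ) = 2 ^ (L + 1) := by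
        rw [Real.rpow_add two_pos, Real.rpow_logb two_pos (by norm_num) (by positivity),
          Real.rpow_one, mul_comm]
    _ ≤ 2 ^ (φ * (ℓ / 2 : ℕ)) := Real.rpow_le_rpow_of_exponent_le one_le_two hexp
    _ = ((1 + 1) ^ φ) ^ (ℓ / 2) := by rw [Real.rpow_mul_natCast zero_le_two]; norm_num
    _ ≤ (1 + φ) ^ (ℓ / 2) := by
        gcongr
        simpa using rpow_one_add_le_one_add_mul_self (s := 1) (by norm_num) (by positivity) hφ1

lemma one_sub_pow_mul_lt_one {m ℓ : ℕ} (hm : 2 ≤ m) (hℓ : 32 * Real.logb 2 m ≤ ℓ)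
    {x : ℝ} (hx0 : 0 ≤ x) (hx : x ≤ 2 * m) :
    (1 - 24 * Real.logb 2 m / ℓ / (2 * (ℓ + 1))) ^ (ℓ ^ 2) * x < 1 := by
  set L := Real.logb 2 m
  have hL : 1 ≤ L := one_le_logb_two hm
  have hℓ0 : (0 : ℝ) < ℓ := by linarith
  set ρ := 24 * L / ℓ / (2 * (ℓ + 1))
  have hρℓ : ρ * ℓ ^ 2 = 12 * L * ℓ / (ℓ + 1) := by simp only [ρ]; field_simp; ring
  have hρ1 : ρ ≤ 1 := by
    rw [div_le_one (by positivity), div_le_iff₀ hℓ0]; nlinarith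
  have hlog : Real.log (2 * m) = (L + 1) * Real.log 2 := by
    have hlog2 : Real.log 2 ≠ 0 := by positivity
    rw [Real.log_mul two_ne_zero (by positivity)]
    simp only [L, Real.logb]
    field_simp
    ring
  have hgap : Real.log (2 * m) < ρ * ℓ ^ 2 := by
    have hlog2 : Real.log 2 < 1 := by linarith [Real.log_two_lt_d9]
    have hℓ1 : (1 : ℝ) ≤ ℓ := by linarith
    rw [hlog, hρℓ, lt_div_iff₀ (by positivity)]
    calc (L + 1) * Real.log 2 * (ℓ + 1) < (L + 1) * 1 * (ℓ + 1) := by gcongr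
      _ ≤ 12 * L * ℓ := by nlinarith
  calc (1 - ρ) ^ (ℓ ^ 2) * x ≤ Real.exp (-ρ) ^ (ℓ ^ 2) * (2 * m) := by
        gcongr
        exact Real.one_sub_le_exp_neg ρ
    _ = Real.exp (Real.log (2 * m) - ρ * ℓ ^ 2) := by
        rw [Real.exp_sub, Real.exp_log (by positivity), ← Real.exp_nat_mul, div_eq_mul_inv,
          ← Real.exp_neg, mul_comm]
        push_cast
        ring_nf
    _ < 1 := Real.exp_lt_one_iff.mpr (by linarith)

theorem statement12_general (G : SimpleGraph V) (hm : 2 ≤ edgeCount G)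
    (hmin : ∀ v : V, 1 ≤ gdeg G v)
    (A B : Finset V) (hcard : A.card ≤ B.card)
    (ℓ : ℕ) (hℓ : 32 * Real.logb 2 (edgeCount G) ≤ (ℓ : ℝ)) :
    (∃ M : Finset (V × V),
      (∀ p ∈ M, p.1 ∈ A ∧ p.2 ∈ B) ∧
      (∀ p ∈ M, ∀ q ∈ M, p ≠ q → p.1 ≠ q.1 ∧ p.2 ≠ q.2) ∧
      M.card = A.card ∧
      ∃ P : ∀ p : {x : V × V // x ∈ M}, G.Walk p.1.1 p.1.2,
        (∀ p, (P p).IsPath ∧ (P p).length ≤ ℓ) ∧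
        (∀ e : Sym2 V, {p : {x : V × V // x ∈ M} | e ∈ (P p).edges}.ncard ≤ ℓ ^ 2)) ∨
    (∃ X : Finset V, X.Nonempty ∧ (Finset.univ \ X).Nonempty ∧
      (gcut G X : ℝ) ≤ 24 * Real.logb 2 (edgeCount G) / (ℓ : ℝ) *
        min (gvol G X : ℝ) (gvol G (Finset.univ \ X) : ℝ)) := by
  refine or_iff_not_imp_right.mpr fun hsparse => ?_
  push Not at hsparse
  have hL := one_le_logb_two hm
  have hφ : 0 < 24 * Real.logb 2 (edgeCount G) / ℓ := by
    have : (0 : ℝ) < ℓ := by linarith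
    positivity
  have hφ2 : 24 * Real.logb 2 (edgeCount G) / ℓ ≤ 2 := by
    rw [div_le_iff₀ (by linarith)]; linarith
  have hpow : (gvol G univ : ℝ) ≤ (1 + 24 * Real.logb 2 (edgeCount G) / ℓ) ^ (ℓ / 2) := by
    rw [gvol_univ]; exact_mod_cast two_mul_le_one_add_pow hm hℓ
  obtain ⟨R, hR, hunrouted⟩ := exists_isRouting_of_isExpander
    (isExpander_of_forall_lt_gcut G hsparse) hφ hφ2 hmin hpow (ℓ ^ 2) A B hcard
  have hA : (#A : ℝ) ≤ 2 * edgeCount G := by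
    exact_mod_cast gvol_univ G ▸ (card_le_univ A).trans (card_le_gvol G hmin univ)
  have hlt := hunrouted.trans_lt (one_sub_pow_mul_lt_one hm hℓ (Nat.cast_nonneg _) hA)
  have hlen : R.length = #A := by
    have := hR.length_le_card
    have : #A < R.length + 1 := by exact_mod_cast (by linarith : (#A : ℝ) < R.length + 1)
    omega
  exact hR.hasShortPathMatching hlen

/-- Either a perfect matching of `A` into `B`, embedded by paths of length at
most `ℓ` with every edge of `G` lying on at most `ℓ²` of the paths, or a sparse
cut. -/
theorem statement12 (G : SimpleGraph V) (hm : 2 ≤ edgeCount G)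
    (hmin : ∀ v : V, 1 ≤ gdeg G v)
    (A B : Finset V) (hAB : Disjoint A B) (hcard : A.card ≤ B.card)
    (ℓ : ℕ) (hℓ : 32 * Real.logb 2 (edgeCount G) ≤ (ℓ : ℝ)) :
    (∃ M : Finset (V × V),
      (∀ p ∈ M, p.1 ∈ A ∧ p.2 ∈ B) ∧
      (∀ p ∈ M, ∀ q ∈ M, p ≠ q → p.1 ≠ q.1 ∧ p.2 ≠ q.2) ∧
      M.card = A.card ∧
      ∃ P : ∀ p : {x : V × V // x ∈ M}, G.Walk p.1.1 p.1.2,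
        (∀ p, (P p).IsPath ∧ (P p).length ≤ ℓ) ∧
        (∀ e : Sym2 V, {p : {x : V × V // x ∈ M} | e ∈ (P p).edges}.ncard ≤ ℓ ^ 2)) ∨
    (∃ X : Finset V, X.Nonempty ∧ (Finset.univ \ X).Nonempty ∧
      (gcut G X : ℝ) ≤ 24 * Real.logb 2 (edgeCount G) / (ℓ : ℝ) *
        min (gvol G X : ℝ) (gvol G (Finset.univ \ X) : ℝ)) :=
  statement12_general G hm hmin A B hcard ℓ hℓ
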